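/- arXiv:2106.08794 — 3 statements merged into one kernel-verified Lean document; each statement's English description precedes it below -/
import Mathlib

section
/- Let p ∈ (1,∞), p' = p/(p−1), and let b₂, b₃ ≥ 0. Then there exist constants B₁, B₂ ≥ 0, depending only on p, b₂, b₃, with the following property: for all Lebesgue-measurable functions φ, ψ : ℝ → [0,∞) such that (a) ∫_ℝ φ(s)^p ds ≤ 1, (b) ∫_{−∞}^t ψ(s)^{p'} ds ≤ b₂ + t for every t ≥ 0, and (c) e^{t/p} ∫_t^∞ e^{−s/p} ψ(s) ds ≤ b₃ for every t ≥ 0, and for every λ ∈ ℝ, the Lebesgue measure of the set E_λ = { t ≥ 0 : F(t) ≤ λ } satisfies |E_λ| ≤ B₁|λ| + B₂, where F(t) = t − ( e^t ∫_t^∞ e^{−s/p'} φ(s) ds · ∫_t^∞ e^{−s/p} ψ(s) ds + ∫_{−∞}^t φ(s) ψ(s) ds )^{p'}. -/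
open MeasureTheory Set

/-- The function `F` from the proof of the local Adams inequality:
`F(t) = t − ( e^t ∫_t^∞ e^{−s/p'} φ(s) ds · ∫_t^∞ e^{−s/p} ψ(s) ds + ∫_{−∞}^t φ(s) ψ(s) ds )^{p'}`,
where `p' = p/(p−1)`. -/
noncomputable def adamsF (p : ℝ) (φ ψ : ℝ → ℝ) (t : ℝ) : ℝ :=
  t - (Real.exp t * (∫ s in Ioi t, Real.exp (-s / (p / (p - 1))) * φ s) *
        (∫ s in Ioi t, Real.exp (-s / p) * ψ s) +
      ∫ s in Iic t, φ s * ψ s) ^ (p / (p - 1))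

/-!
Write `q = p'`, `N = 1 + b₂ + |λ|`, `δ(u) = ∫_u^∞ φ^p ≤ 1` and `n(u) = ∫_{-∞}^u ψ^q ≤ b₂ + u`.
For `t ∈ E_λ` and `0 ≤ s ≤ t`, Hölder's inequality on `(t, ∞)`, `(-∞, s]` and `(s, t]` bounds
`(t - λ)^{1/q}` by `b₃ δ(t)^{1/p} + (1 - δ(s))^{1/p} n(s)^{1/q} + δ(s)^{1/p} (n(t) - n(s))^{1/q}`.
With `s = t`, the concavity of `x ↦ x^{1/q}` gives `δ(t) t ≲ N` for `t ≳ N`, so the tail mass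
`δ` is small there. For two points `t' ≤ t` of `E_λ` beyond `C N`, the choice `s = t'` then
gives `t - t' ≲ N`: the part of `E_λ` beyond `C N` has diameter `≲ N`.
-/

namespace Real.HolderConjugate

variable {p q u v x : ℝ}

theorem rpow_inv_mul_rpow_inv (hpq : p.HolderConjugate q) (hx : 0 ≤ x) :
    x ^ p⁻¹ * x ^ q⁻¹ = x := by
  rw [← Real.rpow_add' hx (by simp [hpq.inv_add_inv_eq_one]), hpq.inv_add_inv_eq_one,
    Real.rpow_one]

/-- The tangent-line inequality for the concave function `x ↦ x ^ q⁻¹` at `u`. -/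
theorem mul_rpow_inv_mul_sub_le (hpq : p.HolderConjugate q) (hu : 0 ≤ u) (hv : 0 ≤ v) :
    q * u ^ p⁻¹ * (v ^ q⁻¹ - u ^ q⁻¹) ≤ v - u := by
  have young := Real.geom_mean_le_arith_mean2_weighted hpq.inv_nonneg hpq.symm.inv_nonneg hu hv
    hpq.inv_add_inv_eq_one
  have hsplit := hpq.rpow_inv_mul_rpow_inv hu
  have hq : q * p⁻¹ = q - 1 := by
    rw [← div_eq_mul_inv, hpq.symm.div_conj_eq_sub_one]
  have hq' : q * q⁻¹ = 1 := mul_inv_cancel₀ hpq.symm.ne_zero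
  nlinarith [hpq.symm.pos]

theorem sub_le_mul_rpow_inv_mul (hpq : p.HolderConjugate q) (hu : 0 ≤ u) (hv : 0 ≤ v)
    {w : ℝ} (h : v ^ q⁻¹ ≤ u ^ q⁻¹ + w) : v - u ≤ q * v ^ p⁻¹ * w :=
  calc v - u ≤ q * v ^ p⁻¹ * (v ^ q⁻¹ - u ^ q⁻¹) := by
        linarith [hpq.mul_rpow_inv_mul_sub_le hv hu]
    _ ≤ q * v ^ p⁻¹ * w := by have := hpq.symm.pos; gcongr; linarith

theorem le_of_le_add_mul_rpow_inv_mul (hpq : p.HolderConjugate q) {a c M : ℝ} (hc : 0 ≤ c)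
    (hM : 0 ≤ M) (hx : 0 ≤ x) (h : x ≤ a + c * M ^ p⁻¹ * x ^ q⁻¹) : x ≤ p * a + c ^ p * M := by
  have hcM : c * M ^ p⁻¹ = (c ^ p * M) ^ p⁻¹ := by
    rw [Real.mul_rpow (by positivity) hM, Real.rpow_rpow_inv hc hpq.ne_zero]
  have young := Real.geom_mean_le_arith_mean2_weighted hpq.inv_nonneg hpq.symm.inv_nonneg
    (by positivity : 0 ≤ c ^ p * M) hx hpq.inv_add_inv_eq_one
  rw [← hcM] at young
  have key : p * x ≤ p * (a + (p⁻¹ * (c ^ p * M) + q⁻¹ * x)) :=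
    mul_le_mul_of_nonneg_left (by linarith) hpq.pos.le
  rw [← hpq.one_sub_inv] at key
  have expand : p * (a + (p⁻¹ * (c ^ p * M) + (1 - p⁻¹) * x)) =
      p * a + c ^ p * M + (p - 1) * x := by
    field_simp [hpq.ne_zero]; ring
  linarith

theorem mul_le_rpow_of_mul_rpow_inv_lt (hpq : p.HolderConjugate q) {δ b c : ℝ} (hδ : 0 ≤ δ)
    (hv : 0 ≤ v) (hc : 0 < c) (h : c * δ * v ^ q⁻¹ < b * δ ^ p⁻¹) : δ * v ≤ (b / c) ^ q := by
  have hδp : 0 < δ ^ p⁻¹ := by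
    rcases hδ.eq_or_lt with rfl | hδ
    · simp [Real.zero_rpow hpq.inv_ne_zero] at h
    · exact Real.rpow_pos_of_pos hδ _
  have hroot : (δ * v) ^ q⁻¹ ≤ b / c := by
    have : δ ^ p⁻¹ * (c * (δ * v) ^ q⁻¹) < δ ^ p⁻¹ * b := by
      calc δ ^ p⁻¹ * (c * (δ * v) ^ q⁻¹) = c * (δ ^ p⁻¹ * δ ^ q⁻¹) * v ^ q⁻¹ := by
            rw [Real.mul_rpow hδ hv]; ring
        _ < δ ^ p⁻¹ * b := by rw [hpq.rpow_inv_mul_rpow_inv hδ]; linarith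
    rw [le_div_iff₀ hc, mul_comm]
    exact (lt_of_mul_lt_mul_left this hδp.le).le
  calc δ * v = ((δ * v) ^ q⁻¹) ^ q := (Real.rpow_inv_rpow (by positivity) hpq.symm.ne_zero).symm
    _ ≤ (b / c) ^ q := by have := hpq.symm.pos; gcongr

theorem mul_rpow_inv_mul_rpow_inv_le_of_le_add (hpq : p.HolderConjugate q) {w d Δ k M : ℝ}
    (hw : 0 ≤ w) (hd : 0 ≤ d) (hΔ : 0 ≤ Δ) (hk : 0 ≤ k) (hM : 0 ≤ M)
    (hwM : w ≤ M + 2 * d * Δ) (hΔx : Δ ≤ x) (hkx : k ≤ x) (hd_small : q * (2 * d) ^ p⁻¹ ≤ 1 / 2) :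
    q * w ^ p⁻¹ * k ^ q⁻¹ ≤ q * M ^ p⁻¹ * x ^ q⁻¹ + 1 / 2 * x := by
  have hq := hpq.symm.pos
  have hp := hpq.inv_nonneg
  have hx : 0 ≤ x := hk.trans hkx
  have hw' : w ^ p⁻¹ ≤ M ^ p⁻¹ + (2 * d) ^ p⁻¹ * Δ ^ p⁻¹ :=
    calc w ^ p⁻¹ ≤ (M + 2 * d * Δ) ^ p⁻¹ := by gcongr
      _ ≤ M ^ p⁻¹ + (2 * d * Δ) ^ p⁻¹ :=
          Real.rpow_add_le_add_rpow hM (by positivity) hpq.inv_nonneg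
            (inv_le_one_of_one_le₀ hpq.lt.le)
      _ = M ^ p⁻¹ + (2 * d) ^ p⁻¹ * Δ ^ p⁻¹ := by rw [Real.mul_rpow (by positivity) hΔ]
  have hΔx' : Δ ^ p⁻¹ * x ^ q⁻¹ ≤ x :=
    calc Δ ^ p⁻¹ * x ^ q⁻¹ ≤ x ^ p⁻¹ * x ^ q⁻¹ := by gcongr
      _ = x := hpq.rpow_inv_mul_rpow_inv hx
  calc q * w ^ p⁻¹ * k ^ q⁻¹ ≤ q * (M ^ p⁻¹ + (2 * d) ^ p⁻¹ * Δ ^ p⁻¹) * x ^ q⁻¹ := by gcongr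
    _ = q * M ^ p⁻¹ * x ^ q⁻¹ + q * (2 * d) ^ p⁻¹ * (Δ ^ p⁻¹ * x ^ q⁻¹) := by ring
    _ ≤ q * M ^ p⁻¹ * x ^ q⁻¹ + 1 / 2 * x := by gcongr

theorem mul_mul_rpow_inv_mul_rpow_inv_le (hpq : p.HolderConjugate q) {δ : ℝ} (hu : 0 ≤ u)
    (hv : 0 ≤ v) (h : (2 * p)⁻¹ * δ * v ^ q⁻¹ ≤ v ^ q⁻¹ - u ^ q⁻¹) :
    q * (δ * (u ^ p⁻¹ * v ^ q⁻¹)) ≤ 2 * p * (v - u) := by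
  have hp := hpq.pos
  have hq := hpq.symm.pos
  calc q * (δ * (u ^ p⁻¹ * v ^ q⁻¹)) = 2 * p * (q * u ^ p⁻¹ * ((2 * p)⁻¹ * δ * v ^ q⁻¹)) := by
        field_simp
    _ ≤ 2 * p * (q * u ^ p⁻¹ * (v ^ q⁻¹ - u ^ q⁻¹)) := by gcongr
    _ ≤ 2 * p * (v - u) := by gcongr; exact hpq.mul_rpow_inv_mul_sub_le hu hv

theorem mul_rpow_inv_le_half (hpq : p.HolderConjugate q) {d c t : ℝ} (hd : 0 ≤ d) (hc : 0 < c)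
    (hdt : d * t ≤ c) (ht : 2 * (2 * q) ^ p * c ≤ t) : q * (2 * d) ^ p⁻¹ ≤ 1 / 2 := by
  have hp := hpq.pos
  have hq := hpq.symm.pos
  have h1 : 2 * d * (2 * q) ^ p ≤ 1 := by
    have := mul_le_mul_of_nonneg_left ht hd
    by_contra! h
    nlinarith
  have h2 : (2 * d) ^ p⁻¹ * (2 * q) ≤ 1 :=
    calc (2 * d) ^ p⁻¹ * (2 * q) = (2 * d * (2 * q) ^ p) ^ p⁻¹ := by
          rw [Real.mul_rpow (x := 2 * d) (by positivity) (by positivity),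
            Real.rpow_rpow_inv (by positivity) hpq.ne_zero]
      _ ≤ 1 := Real.rpow_le_one (by positivity) h1 hpq.inv_nonneg
  linarith

end Real.HolderConjugate

section Holder

variable {α : Type*} [MeasurableSpace α] {μ : Measure α} {p q : ℝ} {f g : α → ℝ}

theorem memLp_ofReal_of_integrable_rpow (hp : 0 < p) (hf : AEStronglyMeasurable f μ)
    (hf0 : ∀ x, 0 ≤ f x) (h : Integrable (fun x => f x ^ p) μ) :
    MemLp f (ENNReal.ofReal p) μ := by
  refine (integrable_norm_rpow_iff hf (by simpa using hp) ENNReal.ofReal_ne_top).1 ?_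
  simpa [Real.norm_of_nonneg (hf0 _), ENNReal.toReal_ofReal hp.le] using h

theorem integral_mul_le_of_integrable_rpow (hpq : p.HolderConjugate q)
    (hf : AEStronglyMeasurable f μ) (hg : AEStronglyMeasurable g μ)
    (hf0 : ∀ x, 0 ≤ f x) (hg0 : ∀ x, 0 ≤ g x)
    (hfp : Integrable (fun x => f x ^ p) μ) (hgq : Integrable (fun x => g x ^ q) μ) :
    ∫ x, f x * g x ∂μ ≤ (∫ x, f x ^ p ∂μ) ^ p⁻¹ * (∫ x, g x ^ q ∂μ) ^ q⁻¹ := by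
  simpa only [one_div] using integral_mul_le_Lp_mul_Lq_of_nonneg hpq (ae_of_all _ hf0)
    (ae_of_all _ hg0) (memLp_ofReal_of_integrable_rpow hpq.pos hf hf0 hfp)
    (memLp_ofReal_of_integrable_rpow hpq.symm.pos hg hg0 hgq)

theorem integrable_mul_of_integrable_rpow (hpq : p.HolderConjugate q)
    (hf : AEStronglyMeasurable f μ) (hg : AEStronglyMeasurable g μ)
    (hf0 : ∀ x, 0 ≤ f x) (hg0 : ∀ x, 0 ≤ g x)
    (hfp : Integrable (fun x => f x ^ p) μ) (hgq : Integrable (fun x => g x ^ q) μ) :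
    Integrable (fun x => f x * g x) μ :=
  have := hpq.ennrealOfReal
  (memLp_ofReal_of_integrable_rpow hpq.pos hf hf0 hfp).integrable_mul
    (memLp_ofReal_of_integrable_rpow hpq.symm.pos hg hg0 hgq)

theorem integrable_and_integral_le_of_lintegral_le {c : ℝ} (hf : AEStronglyMeasurable f μ)
    (hf0 : ∀ x, 0 ≤ f x) (hc : 0 ≤ c) (h : ∫⁻ x, ENNReal.ofReal (f x) ∂μ ≤ ENNReal.ofReal c) :
    Integrable f μ ∧ ∫ x, f x ∂μ ≤ c := by
  refine ⟨⟨hf, (hasFiniteIntegral_iff_ofReal (ae_of_all _ hf0)).2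
    (h.trans_lt ENNReal.ofReal_lt_top)⟩, ?_⟩
  rw [integral_eq_lintegral_of_nonneg_ae (ae_of_all _ hf0) hf]
  exact ENNReal.toReal_le_of_le_ofReal hc h

end Holder

theorem volume_le_of_forall_sub_le {E : Set ℝ} {a d : ℝ} (hE : E ⊆ Ici 0)
    (h : ∀ x ∈ E, ∀ y ∈ E, a ≤ x → x ≤ y → y - x ≤ d) :
    volume E ≤ ENNReal.ofReal a + ENNReal.ofReal d := by
  have hcover : E ⊆ Ico 0 a ∪ E ∩ Ici a := fun x hx => by
    rcases lt_or_ge x a with hxa | hxa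
    exacts [Or.inl ⟨hE hx, hxa⟩, Or.inr ⟨hx, hxa⟩]
  have hdiam : Metric.ediam (E ∩ Ici a) ≤ ENNReal.ofReal d := by
    refine Metric.ediam_le_of_forall_dist_le fun x hx y hy => ?_
    rw [Real.dist_eq, abs_le]
    rcases le_total x y with hxy | hxy
    · constructor <;> linarith [h x hx.1 y hy.1 hx.2 hxy]
    · constructor <;> linarith [h y hy.1 x hx.1 hy.2 hxy]
  calc volume E ≤ volume (Ico 0 a ∪ E ∩ Ici a) := measure_mono hcover
    _ ≤ volume (Ico 0 a) + volume (E ∩ Ici a) := measure_union_le _ _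
    _ ≤ ENNReal.ofReal a + ENNReal.ofReal d := by
        rw [Real.volume_Ico, sub_zero]
        exact add_le_add le_rfl ((Real.volume_le_diam _).trans hdiam)

/-- The Hölder bound at a point `t` of the sublevel set `{F ≤ lam}`, split at `s`; in the
application `δ u = ∫_u^∞ φ^p` and `n u = ∫_{-∞}^u ψ^q`. -/
def SplitEstimate (p q b₃ lam : ℝ) (δ n : ℝ → ℝ) (t : ℝ) : Prop :=
  ∀ s ∈ Icc 0 t, (t - lam) ^ q⁻¹ ≤
    b₃ * δ t ^ p⁻¹ + (1 - δ s) ^ p⁻¹ * n s ^ q⁻¹ + δ s ^ p⁻¹ * (n t - n s) ^ q⁻¹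

namespace SplitEstimate

variable {p q b₂ b₃ lam N t t' : ℝ} {δ n : ℝ → ℝ}

theorem self (hpq : p.HolderConjugate q) (h : SplitEstimate p q b₃ lam δ n t) (ht : 0 ≤ t) :
    (t - lam) ^ q⁻¹ ≤ b₃ * δ t ^ p⁻¹ + (1 - δ t) ^ p⁻¹ * n t ^ q⁻¹ := by
  simpa [Real.zero_rpow hpq.symm.inv_ne_zero] using h t ⟨ht, le_rfl⟩

theorem tail_mul_le (hpq : p.HolderConjugate q) (hb₂ : 0 ≤ b₂) (hb₃ : 0 ≤ b₃)
    (h : SplitEstimate p q b₃ lam δ n t) (hδ : δ t ∈ Icc 0 1) (hn : n t ∈ Icc 0 (b₂ + t))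
    (hN : b₂ + |lam| ≤ N) (hN1 : 1 ≤ N) (ht : 2 * N ≤ t) :
    δ t * t ≤ ((2 * p * b₃) ^ q + 4 * p) * N := by
  obtain ⟨hδ0, hδ1⟩ := hδ
  obtain ⟨hn0, hnb⟩ := hn
  have hp := hpq.pos
  have hq := hpq.symm.pos
  suffices δ t * t ≤ (2 * p * b₃) ^ q + 4 * p * N by
    nlinarith [Real.rpow_nonneg (by positivity : 0 ≤ 2 * p * b₃) q]
  have hpδ : p⁻¹ * δ t ≤ 1 := by
    nlinarith [inv_le_one_of_one_le₀ hpq.lt.le, hpq.inv_nonneg]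
  have hlam := abs_le.mp (show |lam| ≤ t / 2 by linarith)
  set Y := (b₂ + t) ^ q⁻¹
  have bernoulli : (1 - δ t) ^ p⁻¹ ≤ 1 - p⁻¹ * δ t := by
    simpa [sub_eq_add_neg] using rpow_one_add_le_one_add_mul_self (s := -δ t)
      (by linarith) hpq.inv_nonneg (inv_le_one_of_one_le₀ hpq.lt.le)
  have H : (t - lam) ^ q⁻¹ ≤ b₃ * δ t ^ p⁻¹ + (1 - p⁻¹ * δ t) * Y := by
    refine (h.self hpq (by linarith)).trans (add_le_add le_rfl ?_)
    exact mul_le_mul bernoulli (Real.rpow_le_rpow hn0 hnb hpq.symm.inv_nonneg)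
      (Real.rpow_nonneg hn0 _) (by linarith)
  rcases le_or_gt (b₃ * δ t ^ p⁻¹) ((2 * p)⁻¹ * δ t * Y) with hsmall | hlarge
  · have hrY : t / 2 ≤ (t - lam) ^ p⁻¹ * Y :=
      calc t / 2 = (t / 2) ^ p⁻¹ * (t / 2) ^ q⁻¹ :=
            (hpq.rpow_inv_mul_rpow_inv (by linarith)).symm
        _ ≤ (t - lam) ^ p⁻¹ * Y :=
            mul_le_mul (Real.rpow_le_rpow (by linarith) (by linarith) hpq.inv_nonneg)
              (Real.rpow_le_rpow (by linarith) (by linarith) hpq.symm.inv_nonneg)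
              (Real.rpow_nonneg (by linarith) _) (Real.rpow_nonneg (by linarith) _)
    have half : p⁻¹ * δ t * Y = 2 * ((2 * p)⁻¹ * δ t * Y) := by field_simp
    have key := hpq.mul_mul_rpow_inv_mul_rpow_inv_le (δ := δ t) (u := t - lam) (v := b₂ + t)
      (by linarith) (by linarith) (by nlinarith)
    have hprod : 0 ≤ δ t * ((t - lam) ^ p⁻¹ * Y) := by nlinarith
    calc δ t * t ≤ 2 * (δ t * ((t - lam) ^ p⁻¹ * Y)) := by nlinarith
      _ ≤ 2 * (q * (δ t * ((t - lam) ^ p⁻¹ * Y))) :=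
          mul_le_mul_of_nonneg_left (le_mul_of_one_le_left hprod hpq.symm.lt.le) zero_le_two
      _ ≤ 2 * (2 * p * (b₂ + t - (t - lam))) := by gcongr
      _ ≤ (2 * p * b₃) ^ q + 4 * p * N := by
          nlinarith [le_abs_self lam, Real.rpow_nonneg (by positivity : 0 ≤ 2 * p * b₃) q]
  · calc δ t * t ≤ δ t * (b₂ + t) := by gcongr; linarith
      _ ≤ (b₃ / (2 * p)⁻¹) ^ q :=
          hpq.mul_le_rpow_of_mul_rpow_inv_lt hδ0 (by linarith) (by positivity) hlarge
      _ ≤ (2 * p * b₃) ^ q + 4 * p * N := by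
          rw [div_inv_eq_mul, mul_comm]; nlinarith

theorem sub_le_of_self (hpq : p.HolderConjugate q) (h : SplitEstimate p q b₃ lam δ n t)
    (ht : 0 ≤ t) (hlam : lam ≤ t) (hδ : δ t ∈ Icc 0 1) (hn : 0 ≤ n t) :
    t - lam - n t ≤ q * b₃ * ((t - lam) * δ t) ^ p⁻¹ := by
  have hroot : (t - lam) ^ q⁻¹ ≤ n t ^ q⁻¹ + b₃ * δ t ^ p⁻¹ := by
    have : (1 - δ t) ^ p⁻¹ ≤ 1 := Real.rpow_le_one (by linarith [hδ.2]) (by linarith [hδ.1])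
      hpq.inv_nonneg
    nlinarith [h.self hpq ht, Real.rpow_nonneg hn q⁻¹]
  calc t - lam - n t ≤ q * (t - lam) ^ p⁻¹ * (b₃ * δ t ^ p⁻¹) :=
        hpq.sub_le_mul_rpow_inv_mul hn (by linarith) hroot
    _ = q * b₃ * ((t - lam) * δ t) ^ p⁻¹ := by
        rw [Real.mul_rpow (by linarith) hδ.1]; ring

theorem sub_le_of_split (hpq : p.HolderConjugate q) (h : SplitEstimate p q b₃ lam δ n t)
    (ht' : 0 ≤ t') (htt' : t' ≤ t) (hlam : lam ≤ t) (hδ' : δ t' ∈ Icc 0 1) (hδ : 0 ≤ δ t)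
    (hn' : n t' ∈ Icc 0 (b₂ + t')) :
    t - lam - (b₂ + t') ≤
      q * b₃ * ((t - lam) * δ t) ^ p⁻¹ + q * ((t - lam) * δ t') ^ p⁻¹ * (n t - n t') ^ q⁻¹ := by
  have hroot : (t - lam) ^ q⁻¹ ≤
      (b₂ + t') ^ q⁻¹ + (b₃ * δ t ^ p⁻¹ + δ t' ^ p⁻¹ * (n t - n t') ^ q⁻¹) := by
    have : (1 - δ t') ^ p⁻¹ * n t' ^ q⁻¹ ≤ 1 * (b₂ + t') ^ q⁻¹ :=
      mul_le_mul (Real.rpow_le_one (by linarith [hδ'.2]) (by linarith [hδ'.1]) hpq.inv_nonneg)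
        (Real.rpow_le_rpow hn'.1 hn'.2 hpq.symm.inv_nonneg) (Real.rpow_nonneg hn'.1 _) zero_le_one
    linarith [h t' ⟨ht', htt'⟩]
  calc t - lam - (b₂ + t')
      ≤ q * (t - lam) ^ p⁻¹ * (b₃ * δ t ^ p⁻¹ + δ t' ^ p⁻¹ * (n t - n t') ^ q⁻¹) :=
        hpq.sub_le_mul_rpow_inv_mul (by linarith [hn'.1, hn'.2]) (by linarith) hroot
    _ = _ := by
        rw [Real.mul_rpow (by linarith) hδ, Real.mul_rpow (by linarith) hδ'.1]; ring

theorem sub_le (hpq : p.HolderConjugate q) (hb₂ : 0 ≤ b₂) (hb₃ : 0 ≤ b₃) {A : ℝ} (hA : 1 ≤ A)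
    (hN : b₂ + |lam| ≤ N) (hN1 : 1 ≤ N)
    (h' : SplitEstimate p q b₃ lam δ n t') (h : SplitEstimate p q b₃ lam δ n t)
    (hδ' : δ t' ∈ Icc 0 1) (hδ : δ t ∈ Icc 0 1) (hn' : n t' ∈ Icc 0 (b₂ + t'))
    (hnn : n t' ≤ n t) (hn : n t ≤ b₂ + t)
    (htail' : δ t' * t' ≤ A * N) (htail : δ t * t ≤ A * N)
    (ht' : 2 * (2 * q) ^ p * A * N ≤ t') (htt' : t' ≤ t) :
    t - t' ≤ (4 * p + 8 * p * q * b₃ * A + 2 * (2 * q) ^ p * A) * N := by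
  have hp := hpq.pos
  have hq := hpq.symm.pos
  set M := 2 * A * N
  have hM : 1 ≤ M := by nlinarith
  have h2q : 1 ≤ (2 * q) ^ p := Real.one_le_rpow (by linarith [hpq.symm.lt]) hp.le
  have hlam := abs_le.mp (show |lam| ≤ t' by nlinarith [abs_nonneg lam])
  have ht'0 : 0 ≤ t' := by linarith [abs_nonneg lam]
  have hδ0 := hδ'.1
  have hroot_le : ∀ u d, 0 ≤ u → 0 ≤ d → u * d ≤ M → q * b₃ * (u * d) ^ p⁻¹ ≤ q * b₃ * M :=
    fun u d (hu : 0 ≤ u) (hd : 0 ≤ d) hud => mul_le_mul_of_nonneg_left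
      ((Real.rpow_le_rpow (by positivity) hud hpq.inv_nonneg).trans
        (Real.rpow_le_self_of_one_le hM (inv_le_one_of_one_le₀ hpq.lt.le))) (by positivity)
  have hδ'_small := hpq.mul_rpow_inv_le_half hδ0 (mul_pos (by linarith) (by linarith)) htail'
    (by linarith)
  have hM' := hroot_le (t' - lam) (δ t') (by linarith) hδ0
    (by nlinarith [mul_le_mul_of_nonneg_right (show t' - lam ≤ 2 * t' by linarith) hδ0])
  have hM'' := hroot_le (t - lam) (δ t) (by linarith) hδ.1
    (by nlinarith [mul_le_mul_of_nonneg_right (show t - lam ≤ 2 * t by linarith) hδ.1])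
  have hqbM : 0 ≤ q * b₃ * M := by positivity
  set x := t - t' + N + q * b₃ * M
  have hk : n t - n t' ≤ x := by
    linarith [h'.sub_le_of_self hpq ht'0 (by linarith) hδ' hn'.1, le_abs_self lam]
  have hcross := hpq.mul_rpow_inv_mul_rpow_inv_le_of_le_add (w := (t - lam) * δ t')
    (Δ := t - t') (x := x) (M := M)
    (mul_nonneg (by linarith) hδ0) hδ0 (by linarith) (sub_nonneg.2 hnn) (by linarith)
    (by nlinarith) (by linarith) hk hδ'_small
  have hx : x ≤ (4 * N + 4 * q * b₃ * M) + 2 * q * M ^ p⁻¹ * x ^ q⁻¹ := by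
    linarith [h.sub_le_of_split hpq ht'0 htt' (by linarith) hδ' hδ.1 hn', le_abs_self lam]
  calc t - t' ≤ x := by linarith
    _ ≤ p * (4 * N + 4 * q * b₃ * M) + (2 * q) ^ p * M :=
        hpq.le_of_le_add_mul_rpow_inv_mul (by positivity) (by linarith)
          (by linarith [sub_nonneg.2 hnn]) hx
    _ = _ := by ring

theorem exists_volume_le (hpq : p.HolderConjugate q) (hb₃ : 0 ≤ b₃) :
    ∃ B, 0 ≤ B ∧ ∀ (b₂ lam N : ℝ) (δ n : ℝ → ℝ) (E : Set ℝ), 0 ≤ b₂ → b₂ + |lam| ≤ N → 1 ≤ N →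
      (∀ u, δ u ∈ Icc 0 1) → (∀ u, 0 ≤ u → n u ∈ Icc 0 (b₂ + u)) → MonotoneOn n (Ici 0) →
      E ⊆ Ici 0 → (∀ t ∈ E, lam ≤ t → SplitEstimate p q b₃ lam δ n t) →
      volume E ≤ ENNReal.ofReal (B * N) := by
  have hp := hpq.pos
  have hq := hpq.symm.pos
  set A := (2 * p * b₃) ^ q + 4 * p
  have hA : 1 ≤ A := by linarith [hpq.lt, Real.rpow_nonneg (by positivity : 0 ≤ 2 * p * b₃) q]
  set T := 2 * (2 * q) ^ p * A
  set D := 4 * p + 8 * p * q * b₃ * A + 2 * (2 * q) ^ p * A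
  have hT : 2 ≤ T := by
    nlinarith [Real.one_le_rpow (by linarith [hpq.symm.lt] : (1 : ℝ) ≤ 2 * q) hp.le]
  refine ⟨T + D, by positivity, fun b₂ lam N δ n E hb₂ hN hN1 hδ hn hmono hE hsplit => ?_⟩
  have hdiam : ∀ t' ∈ E, ∀ t ∈ E, T * N ≤ t' → t' ≤ t → t - t' ≤ D * N := by
    intro t' ht'E t htE ht' htt'
    have h2N : 2 * N ≤ t' := by nlinarith
    have hlam : lam ≤ t' := by linarith [le_abs_self lam]
    have h' := hsplit t' ht'E hlam
    have h := hsplit t htE (hlam.trans htt')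
    have hn' := hn t' (hE ht'E)
    have hnt := hn t (hE htE)
    exact h'.sub_le hpq hb₂ hb₃ hA hN hN1 h (hδ t') (hδ t) hn'
      (hmono (hE ht'E) (hE htE) htt') hnt.2
      (h'.tail_mul_le hpq hb₂ hb₃ (hδ t') hn' hN hN1 h2N)
      (h.tail_mul_le hpq hb₂ hb₃ (hδ t) hnt hN hN1 (h2N.trans htt')) ht' htt'
  calc volume E ≤ ENNReal.ofReal (T * N) + ENNReal.ofReal (D * N) :=
        volume_le_of_forall_sub_le hE hdiam
    _ = ENNReal.ofReal ((T + D) * N) := by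
        rw [← ENNReal.ofReal_add (by positivity) (by positivity), ← add_mul]

end SplitEstimate

section Analysis

variable {p q : ℝ} {φ ψ : ℝ → ℝ} {s t : ℝ}

theorem integral_Ioi_exp_mul_le (hpq : p.HolderConjugate q) (hφ : Measurable φ)
    (hφ0 : ∀ x, 0 ≤ φ x) (hφp : IntegrableOn (fun x => φ x ^ p) (Ioi t)) :
    ∫ x in Ioi t, Real.exp (-x / q) * φ x ≤ (∫ x in Ioi t, φ x ^ p) ^ p⁻¹ * Real.exp (-t / q) := by
  have hexp : ∀ x, Real.exp (-x / q) ^ q = Real.exp (-x) := fun x => by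
    rw [← Real.exp_mul, div_mul_cancel₀ _ hpq.symm.ne_zero]
  have hint : IntegrableOn (fun x => Real.exp (-x / q) ^ q) (Ioi t) := by
    simpa [hexp] using exp_neg_integrableOn_Ioi t zero_lt_one
  calc ∫ x in Ioi t, Real.exp (-x / q) * φ x = ∫ x in Ioi t, φ x * Real.exp (-x / q) := by
        simp_rw [mul_comm]
    _ ≤ (∫ x in Ioi t, φ x ^ p) ^ p⁻¹ * (∫ x in Ioi t, Real.exp (-x / q) ^ q) ^ q⁻¹ :=
        integral_mul_le_of_integrable_rpow hpq hφ.aestronglyMeasurable (by fun_prop) hφ0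
          (fun _ => (Real.exp_pos _).le) hφp hint
    _ = (∫ x in Ioi t, φ x ^ p) ^ p⁻¹ * Real.exp (-t / q) := by
        simp_rw [hexp, integral_exp_neg_Ioi, ← Real.exp_mul, div_eq_mul_inv]

theorem exp_mul_integral_mul_integral_le (hpq : p.HolderConjugate q) {b₃ : ℝ}
    (hφ : Measurable φ) (hφ0 : ∀ x, 0 ≤ φ x) (hψ0 : ∀ x, 0 ≤ ψ x)
    (hφp : IntegrableOn (fun x => φ x ^ p) (Ioi t))
    (hψexp : ∫ x in Ioi t, Real.exp (-x / p) * ψ x ≤ Real.exp (-t / p) * b₃) :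
    Real.exp t * (∫ x in Ioi t, Real.exp (-x / q) * φ x) *
        (∫ x in Ioi t, Real.exp (-x / p) * ψ x) ≤ b₃ * (∫ x in Ioi t, φ x ^ p) ^ p⁻¹ := by
  have hJ : 0 ≤ ∫ x in Ioi t, Real.exp (-x / p) * ψ x :=
    setIntegral_nonneg measurableSet_Ioi fun x _ => mul_nonneg (Real.exp_pos _).le (hψ0 x)
  have hδ : 0 ≤ ∫ x in Ioi t, φ x ^ p :=
    setIntegral_nonneg measurableSet_Ioi fun x _ => Real.rpow_nonneg (hφ0 x) p
  calc Real.exp t * (∫ x in Ioi t, Real.exp (-x / q) * φ x) *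
        (∫ x in Ioi t, Real.exp (-x / p) * ψ x)
      ≤ Real.exp t * ((∫ x in Ioi t, φ x ^ p) ^ p⁻¹ * Real.exp (-t / q)) *
          (Real.exp (-t / p) * b₃) := by
        gcongr
        exact integral_Ioi_exp_mul_le hpq hφ hφ0 hφp
    _ = b₃ * (∫ x in Ioi t, φ x ^ p) ^ p⁻¹ *
          (Real.exp t * Real.exp (-t / q) * Real.exp (-t / p)) := by ring
    _ = b₃ * (∫ x in Ioi t, φ x ^ p) ^ p⁻¹ := by
        rw [← Real.exp_add, ← Real.exp_add,
          show t + -t / q + -t / p = t * (1 - (p⁻¹ + q⁻¹)) by ring, hpq.inv_add_inv_eq_one,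
          sub_self, mul_zero, Real.exp_zero, mul_one]

theorem integral_Iic_mul_le (hpq : p.HolderConjugate q) (hφ : Measurable φ) (hψ : Measurable ψ)
    (hφ0 : ∀ x, 0 ≤ φ x) (hψ0 : ∀ x, 0 ≤ ψ x) (hst : s ≤ t)
    (hφp : IntegrableOn (fun x => φ x ^ p) (Iic t))
    (hψq : IntegrableOn (fun x => ψ x ^ q) (Iic t)) :
    ∫ x in Iic t, φ x * ψ x ≤
      (∫ x in Iic s, φ x ^ p) ^ p⁻¹ * (∫ x in Iic s, ψ x ^ q) ^ q⁻¹ +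
        (∫ x in Ioc s t, φ x ^ p) ^ p⁻¹ * (∫ x in Ioc s t, ψ x ^ q) ^ q⁻¹ := by
  have hIic : Iic s ⊆ Iic t := Iic_subset_Iic.2 hst
  have hIoc : Ioc s t ⊆ Iic t := Ioc_subset_Iic_self
  have hint (S : Set ℝ) (hS : S ⊆ Iic t) :=
    integrable_mul_of_integrable_rpow hpq hφ.aestronglyMeasurable hψ.aestronglyMeasurable hφ0 hψ0
      (hφp.mono_set hS) (hψq.mono_set hS)
  have hle (S : Set ℝ) (hS : S ⊆ Iic t) :=
    integral_mul_le_of_integrable_rpow hpq hφ.aestronglyMeasurable hψ.aestronglyMeasurable hφ0 hψ0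
      (hφp.mono_set hS) (hψq.mono_set hS)
  rw [← Iic_union_Ioc_eq_Iic hst, setIntegral_union (Iic_disjoint_Ioc le_rfl) measurableSet_Ioc
    (hint _ hIic) (hint _ hIoc)]
  exact add_le_add (hle _ hIic) (hle _ hIoc)

theorem rpow_inv_le_of_adamsF_le (hpq : p.HolderConjugate q) {lam : ℝ} (hφ0 : ∀ x, 0 ≤ φ x)
    (hψ0 : ∀ x, 0 ≤ ψ x) (hlam : lam ≤ t) (hF : adamsF p φ ψ t ≤ lam) :
    (t - lam) ^ q⁻¹ ≤ Real.exp t * (∫ x in Ioi t, Real.exp (-x / q) * φ x) *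
      (∫ x in Ioi t, Real.exp (-x / p) * ψ x) + ∫ x in Iic t, φ x * ψ x := by
  rw [adamsF, ← hpq.conjugate_eq] at hF
  have h1 : 0 ≤ ∫ x in Ioi t, Real.exp (-x / q) * φ x :=
    setIntegral_nonneg measurableSet_Ioi fun x _ => mul_nonneg (Real.exp_pos _).le (hφ0 x)
  have h2 : 0 ≤ ∫ x in Ioi t, Real.exp (-x / p) * ψ x :=
    setIntegral_nonneg measurableSet_Ioi fun x _ => mul_nonneg (Real.exp_pos _).le (hψ0 x)
  have h3 : 0 ≤ ∫ x in Iic t, φ x * ψ x :=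
    setIntegral_nonneg measurableSet_Iic fun x _ => mul_nonneg (hφ0 x) (hψ0 x)
  rw [Real.rpow_inv_le_iff_of_pos (by linarith) (by positivity) hpq.symm.pos]
  linarith

theorem splitEstimate_of_adamsF_le (hpq : p.HolderConjugate q) {b₃ lam : ℝ}
    (hφ : Measurable φ) (hψ : Measurable ψ) (hφ0 : ∀ x, 0 ≤ φ x) (hψ0 : ∀ x, 0 ≤ ψ x)
    (hφp : Integrable (fun x => φ x ^ p)) (hφ1 : ∫ x, φ x ^ p ≤ 1)
    (hψq : IntegrableOn (fun x => ψ x ^ q) (Iic t))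
    (hψexp : ∫ x in Ioi t, Real.exp (-x / p) * ψ x ≤ Real.exp (-t / p) * b₃)
    (hlam : lam ≤ t) (hF : adamsF p φ ψ t ≤ lam) :
    SplitEstimate p q b₃ lam (fun u => ∫ x in Ioi u, φ x ^ p) (fun u => ∫ x in Iic u, ψ x ^ q)
      t := by
  rintro s ⟨-, hst⟩
  have hφ0' : ∀ x, 0 ≤ φ x ^ p := fun x => Real.rpow_nonneg (hφ0 x) p
  have hφI (S : Set ℝ) : 0 ≤ ∫ x in S, φ x ^ p := integral_nonneg hφ0'
  have hψI (S : Set ℝ) : 0 ≤ (∫ x in S, ψ x ^ q) ^ q⁻¹ :=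
    Real.rpow_nonneg (integral_nonneg fun x => Real.rpow_nonneg (hψ0 x) q) _
  have hm : ∫ x in Iic s, φ x ^ p ≤ 1 - ∫ x in Ioi s, φ x ^ p := by
    have := integral_add_compl (measurableSet_Iic (a := s)) hφp
    rw [compl_Iic] at this
    linarith
  have hd : ∫ x in Ioc s t, φ x ^ p ≤ ∫ x in Ioi s, φ x ^ p :=
    setIntegral_mono_set hφp.integrableOn (ae_of_all _ hφ0') Ioc_subset_Ioi_self.eventuallyLE
  have hk : (∫ x in Iic s, ψ x ^ q) + ∫ x in Ioc s t, ψ x ^ q = ∫ x in Iic t, ψ x ^ q := by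
    have := setIntegral_union (Iic_disjoint_Ioc le_rfl) measurableSet_Ioc
      (hψq.mono_set (Iic_subset_Iic.2 hst)) (hψq.mono_set Ioc_subset_Iic_self)
    rw [Iic_union_Ioc_eq_Iic hst] at this
    exact this.symm
  calc (t - lam) ^ q⁻¹
      ≤ Real.exp t * (∫ x in Ioi t, Real.exp (-x / q) * φ x) *
          (∫ x in Ioi t, Real.exp (-x / p) * ψ x) + ∫ x in Iic t, φ x * ψ x :=
        rpow_inv_le_of_adamsF_le hpq hφ0 hψ0 hlam hF
    _ ≤ b₃ * (∫ x in Ioi t, φ x ^ p) ^ p⁻¹ +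
          ((∫ x in Iic s, φ x ^ p) ^ p⁻¹ * (∫ x in Iic s, ψ x ^ q) ^ q⁻¹ +
            (∫ x in Ioc s t, φ x ^ p) ^ p⁻¹ * (∫ x in Ioc s t, ψ x ^ q) ^ q⁻¹) :=
        add_le_add (exp_mul_integral_mul_integral_le hpq hφ hφ0 hψ0 hφp.integrableOn hψexp)
          (integral_Iic_mul_le hpq hφ hψ hφ0 hψ0 hst hφp.integrableOn hψq)
    _ ≤ _ := by
        dsimp only
        rw [← add_assoc, ← hk, add_sub_cancel_left]
        have := hpq.inv_nonneg
        have := hφI (Iic s)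
        have := hφI (Ioc s t)
        have := hψI (Iic s)
        have := hψI (Ioc s t)
        gcongr

theorem integral_Ioi_exp_mul_le_of_lintegral_le (hψ : Measurable ψ) (hψ0 : ∀ x, 0 ≤ ψ x)
    {b₃ : ℝ} (hb₃ : 0 ≤ b₃)
    (h : ENNReal.ofReal (Real.exp (t / p)) *
      (∫⁻ x in Ioi t, ENNReal.ofReal (Real.exp (-x / p) * ψ x)) ≤ ENNReal.ofReal b₃) :
    ∫ x in Ioi t, Real.exp (-x / p) * ψ x ≤ Real.exp (-t / p) * b₃ := by
  refine (integrable_and_integral_le_of_lintegral_le (by fun_prop)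
    (fun x => mul_nonneg (Real.exp_pos _).le (hψ0 x)) (by positivity) ?_).2
  calc ∫⁻ x in Ioi t, ENNReal.ofReal (Real.exp (-x / p) * ψ x)
      = ENNReal.ofReal (Real.exp (-t / p)) * (ENNReal.ofReal (Real.exp (t / p)) *
          ∫⁻ x in Ioi t, ENNReal.ofReal (Real.exp (-x / p) * ψ x)) := by
        rw [← mul_assoc, ← ENNReal.ofReal_mul (Real.exp_pos _).le, ← Real.exp_add, neg_div,
          neg_add_cancel, Real.exp_zero, ENNReal.ofReal_one, one_mul]
    _ ≤ ENNReal.ofReal (Real.exp (-t / p)) * ENNReal.ofReal b₃ := by gcongr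
    _ = ENNReal.ofReal (Real.exp (-t / p) * b₃) := (ENNReal.ofReal_mul (Real.exp_pos _).le).symm

theorem integral_Ioi_mem_Icc (hφ0 : ∀ x, 0 ≤ φ x) (hφp : Integrable (fun x => φ x ^ p))
    (hφ1 : ∫ x, φ x ^ p ≤ 1) (u : ℝ) : ∫ x in Ioi u, φ x ^ p ∈ Icc 0 1 :=
  ⟨setIntegral_nonneg measurableSet_Ioi fun x _ => Real.rpow_nonneg (hφ0 x) p,
    (setIntegral_le_integral hφp (ae_of_all _ fun x => Real.rpow_nonneg (hφ0 x) p)).trans hφ1⟩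

theorem monotoneOn_integral_Iic (hψ0 : ∀ x, 0 ≤ ψ x)
    (hψq : ∀ t, 0 ≤ t → IntegrableOn (fun x => ψ x ^ q) (Iic t)) :
    MonotoneOn (fun u => ∫ x in Iic u, ψ x ^ q) (Ici 0) := fun _ _ v hv huv =>
  setIntegral_mono_set (hψq v hv) (ae_of_all _ fun x => Real.rpow_nonneg (hψ0 x) q)
    (Iic_subset_Iic.2 huv).eventuallyLE

end Analysis

/-- Fact (ii) in the proof of the local Adams inequality: the Lebesgue measure of the
sublevel set `E_λ = {t ≥ 0 : F(t) ≤ λ}` satisfies `|E_λ| ≤ B₁|λ| + B₂`, with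
`B₁, B₂` depending only on `p, b₂, b₃`. -/
theorem adamsF_sublevel_measure (p b₂ b₃ : ℝ) (hp : 1 < p) (hb₂ : 0 ≤ b₂) (hb₃ : 0 ≤ b₃) :
    ∃ B₁ B₂ : ℝ, 0 ≤ B₁ ∧ 0 ≤ B₂ ∧ ∀ φ ψ : ℝ → ℝ, Measurable φ → Measurable ψ →
      (∀ s, 0 ≤ φ s) → (∀ s, 0 ≤ ψ s) →
      (∫⁻ s, ENNReal.ofReal (φ s ^ p)) ≤ 1 →
      (∀ t : ℝ, 0 ≤ t →
        (∫⁻ s in Iic t, ENNReal.ofReal (ψ s ^ (p / (p - 1)))) ≤ ENNReal.ofReal (b₂ + t)) →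
      (∀ t : ℝ, 0 ≤ t →
        ENNReal.ofReal (Real.exp (t / p)) *
          (∫⁻ s in Ioi t, ENNReal.ofReal (Real.exp (-s / p) * ψ s)) ≤ ENNReal.ofReal b₃) →
      ∀ lam : ℝ,
        volume {t : ℝ | 0 ≤ t ∧ adamsF p φ ψ t ≤ lam} ≤ ENNReal.ofReal (B₁ * |lam| + B₂) := by
  set q := p / (p - 1)
  have hpq : p.HolderConjugate q := (Real.holderConjugate_iff_eq_conjExponent hp).2 rfl
  obtain ⟨B, hB0, hB⟩ := SplitEstimate.exists_volume_le hpq hb₃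
  refine ⟨B, B * (1 + b₂), hB0, by positivity, fun φ ψ hφ hψ hφ0 hψ0 ha hb hc lam => ?_⟩
  have hφp := integrable_and_integral_le_of_lintegral_le (hφ.pow_const p).aestronglyMeasurable
    (fun s => Real.rpow_nonneg (hφ0 s) p) zero_le_one (by rwa [ENNReal.ofReal_one])
  have hψq : ∀ t, 0 ≤ t →
      IntegrableOn (fun s => ψ s ^ q) (Iic t) ∧ ∫ s in Iic t, ψ s ^ q ≤ b₂ + t := fun t ht =>
    integrable_and_integral_le_of_lintegral_le (hψ.pow_const q).aestronglyMeasurable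
      (fun s => Real.rpow_nonneg (hψ0 s) q) (by linarith) (hb t ht)
  have hn : ∀ u, 0 ≤ u → ∫ s in Iic u, ψ s ^ q ∈ Icc 0 (b₂ + u) := fun u hu =>
    ⟨integral_nonneg fun s => Real.rpow_nonneg (hψ0 s) q, (hψq u hu).2⟩
  have hsplit : ∀ t ∈ {t : ℝ | 0 ≤ t ∧ adamsF p φ ψ t ≤ lam}, lam ≤ t →
      SplitEstimate p q b₃ lam (fun u => ∫ s in Ioi u, φ s ^ p) (fun u => ∫ s in Iic u, ψ s ^ q)
        t := fun t ht hlam =>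
    splitEstimate_of_adamsF_le hpq hφ hψ hφ0 hψ0 hφp.1 hφp.2 (hψq t ht.1).1
      (integral_Ioi_exp_mul_le_of_lintegral_le hψ hψ0 hb₃ (hc t ht.1)) hlam ht.2
  calc volume {t : ℝ | 0 ≤ t ∧ adamsF p φ ψ t ≤ lam} ≤ ENNReal.ofReal (B * (1 + b₂ + |lam|)) :=
        hB b₂ lam _ _ _ _ hb₂ (by linarith) (by linarith [abs_nonneg lam])
          (integral_Ioi_mem_Icc hφ0 hφp.1 hφp.2) hn
          (monotoneOn_integral_Iic hψ0 fun t ht => (hψq t ht).1) (fun t ht => ht.1) hsplit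
    _ = ENNReal.ofReal (B * |lam| + B * (1 + b₂)) := by ring_nf
end

section
/- Let a, b > 0 and let h : (0,∞) → (0,1) be non-increasing. Suppose that for every t ≥ 1 one has t ≤ (1/h(t))^a · ( log(1/h(t)) )^b. Then there exists a constant C > 0 such that h(t) ≤ C t^{−1/a} (log t)^{b/a} for every t ≥ 2. -/
open Set

/-- Lemma 5.5 of the paper: if `h : (0,∞) → (0,1)` is non-increasing and
`t ≤ (1/h(t))^a (log(1/h(t)))^b` for every `t ≥ 1`, then
`h(t) ≤ C t^{−1/a} (log t)^{b/a}` for every `t ≥ 2`, for some constant `C > 0`. -/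
theorem inverse_log_bound (a b : ℝ) (ha : 0 < a) (hb : 0 < b) (h : ℝ → ℝ)
    (hrange : ∀ t : ℝ, 0 < t → 0 < h t ∧ h t < 1)
    (hmono : AntitoneOn h (Ioi (0 : ℝ)))
    (hyp : ∀ t : ℝ, 1 ≤ t → t ≤ (1 / h t) ^ a * Real.log (1 / h t) ^ b) :
    ∃ C : ℝ, 0 < C ∧ ∀ t : ℝ, 2 ≤ t → h t ≤ C * t ^ (-(1 / a)) * Real.log t ^ (b / a) := by
  have hlog2 : 0 < Real.log 2 := Real.log_pos one_lt_two
  refine ⟨max ((Real.log 2) ^ (-(b / a))) (a ^ (-(b / a))),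
    lt_max_of_lt_left (Real.rpow_pos_of_pos hlog2 _), ?_⟩
  intro t ht
  set C := max ((Real.log 2) ^ (-(b / a))) (a ^ (-(b / a))) with hCdef
  have ht0 : (0 : ℝ) < t := by linarith
  obtain ⟨hh0, hh1⟩ := hrange t ht0
  have hlogt : Real.log 2 ≤ Real.log t := Real.log_le_log (by norm_num) ht
  have hlogt0 : 0 < Real.log t := lt_of_lt_of_le hlog2 hlogt
  have hba : 0 < b / a := div_pos hb ha
  have htpow : (0 : ℝ) < t ^ (-(1 / a)) := Real.rpow_pos_of_pos ht0 _
  by_cases hcase : h t ≤ t ^ (-(1 / a))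
  · have h1 : (1 : ℝ) ≤ C * Real.log t ^ (b / a) := by
      have hC1 : (Real.log 2) ^ (-(b / a)) ≤ C := le_max_left _ _
      have hlt : (Real.log 2) ^ (b / a) ≤ (Real.log t) ^ (b / a) :=
        Real.rpow_le_rpow hlog2.le hlogt hba.le
      calc (1 : ℝ) = (Real.log 2) ^ (-(b / a)) * (Real.log 2) ^ (b / a) := by
            rw [← Real.rpow_add hlog2]; simp
        _ ≤ C * Real.log t ^ (b / a) := by
            apply mul_le_mul hC1 hlt (Real.rpow_nonneg hlog2.le _)
            exact le_trans (Real.rpow_pos_of_pos hlog2 _).le hC1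
    calc h t ≤ t ^ (-(1 / a)) * 1 := by rw [mul_one]; exact hcase
      _ ≤ t ^ (-(1 / a)) * (C * Real.log t ^ (b / a)) := by
          exact mul_le_mul_of_nonneg_left h1 htpow.le
      _ = C * t ^ (-(1 / a)) * Real.log t ^ (b / a) := by ring
  · push_neg at hcase
    have hinv1 : 1 < 1 / h t := one_lt_one_div hh0 hh1
    have hHlt : 1 / h t < t ^ (1 / a) := by
      rw [div_lt_iff₀ hh0]
      have := mul_lt_mul_of_pos_left hcase (Real.rpow_pos_of_pos ht0 (1 / a))
      rw [← Real.rpow_add ht0, add_neg_cancel, Real.rpow_zero] at this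
      linarith
    have hL : Real.log (1 / h t) ≤ Real.log t / a := by
      have h2 := Real.log_le_log (by positivity) hHlt.le
      rw [Real.log_rpow ht0, one_div_mul_eq_div] at h2
      exact h2
    have hL0 : 0 < Real.log (1 / h t) := Real.log_pos hinv1
    have key : t ≤ (1 / h t) ^ a * (Real.log t / a) ^ b := by
      refine le_trans (hyp t (by linarith)) ?_
      exact mul_le_mul_of_nonneg_left (Real.rpow_le_rpow hL0.le hL hb.le)
        (Real.rpow_nonneg (by positivity) _)
    have hinvpow : (1 / h t) ^ a = ((h t) ^ a)⁻¹ := by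
      rw [one_div, Real.inv_rpow hh0.le]
    have hpow_le : (h t) ^ a ≤ (Real.log t / a) ^ b / t := by
      rw [le_div_iff₀ ht0, mul_comm]
      rw [hinvpow] at key
      calc t * (h t) ^ a ≤ (((h t) ^ a)⁻¹ * (Real.log t / a) ^ b) * (h t) ^ a := by
            exact mul_le_mul_of_nonneg_right key (Real.rpow_nonneg hh0.le _)
        _ = (Real.log t / a) ^ b := by
            field_simp
      
    have hfinal : h t ≤ ((Real.log t / a) ^ b / t) ^ (1 / a) := by
      have := Real.rpow_le_rpow (Real.rpow_nonneg hh0.le _) hpow_le (by positivity : (0:ℝ) ≤ 1 / a)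
      rwa [← Real.rpow_mul hh0.le, mul_one_div_cancel ha.ne', Real.rpow_one] at this
    have hrw : ((Real.log t / a) ^ b / t) ^ (1 / a)
        = a ^ (-(b / a)) * t ^ (-(1 / a)) * Real.log t ^ (b / a) := by
      rw [Real.div_rpow (Real.rpow_nonneg (by positivity) _) ht0.le,
        ← Real.rpow_mul (by positivity : (0:ℝ) ≤ Real.log t / a),
        Real.div_rpow hlogt0.le ha.le, Real.rpow_neg ha.le, Real.rpow_neg ht0.le,
        mul_one_div b a]
      ring
    rw [hrw] at hfinal
    refine le_trans hfinal ?_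
    have : a ^ (-(b / a)) ≤ C := le_max_right _ _
    have h3 : 0 ≤ t ^ (-(1 / a)) * Real.log t ^ (b / a) := by positivity
    calc a ^ (-(b / a)) * t ^ (-(1 / a)) * Real.log t ^ (b / a)
        = a ^ (-(b / a)) * (t ^ (-(1 / a)) * Real.log t ^ (b / a)) := by ring
      _ ≤ C * (t ^ (-(1 / a)) * Real.log t ^ (b / a)) := mul_le_mul_of_nonneg_right this h3
      _ = C * t ^ (-(1 / a)) * Real.log t ^ (b / a) := by ring
end

section
/- Let l ≥ 1 be an integer and r, z > 0. Then there exists a constant C > 0 such that for every s ∈ (0, 1/2], the integral of e^{2 r Y_l} over the set { Y = (Y₁, …, Y_l) ∈ ℝ^l : Y_l ≥ 0, (r + z) Y_l ≤ log(1/s), |Y| ≤ (1/z) log(1/s) } with respect to Lebesgue measure on ℝ^l is at most C s^{−2r/(z+r)} ( log(1/s) )^{l}. -/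
open MeasureTheory Metric

/-! On the region, `Y_l ≤ log(1/s)/(r+z)`, so the integrand is at most
`exp (2r log(1/s)/(r+z)) = s^{-2r/(z+r)}`; and the region lies in the ball of radius
`log(1/s)/z`, whose volume is `(log(1/s)/z)^l` times that of the unit ball. -/

theorem setLIntegral_le_mul_measure_of_le {α : Type*} [MeasurableSpace α] {μ : Measure α}
    {s : Set α} {f : α → ENNReal} {c : ENNReal} (hf : ∀ x ∈ s, f x ≤ c) :
    ∫⁻ x in s, f x ∂μ ≤ c * μ s :=
  (setLIntegral_mono measurable_const hf).trans_eq (setLIntegral_const s c)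

theorem Measure.addHaar_le_of_subset_closedBall {E : Type*} [NormedAddCommGroup E]
    [NormedSpace ℝ E] [MeasurableSpace E] [BorelSpace E] [FiniteDimensional ℝ E]
    (μ : Measure E) [μ.IsAddHaarMeasure] {s : Set E} {x : E} {R : ℝ} (hR : 0 ≤ R)
    (hs : s ⊆ closedBall x R) :
    μ s ≤ ENNReal.ofReal (R ^ Module.finrank ℝ E * μ.real (ball 0 1)) := by
  calc μ s ≤ μ (closedBall x R) := measure_mono hs
    _ = _ := by
      rw [Measure.addHaar_closedBall μ x hR, ENNReal.ofReal_mul (by positivity),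
        ofReal_measureReal measure_ball_lt_top.ne]

theorem Real.exp_mul_log_one_div {s : ℝ} (hs : 0 < s) (a : ℝ) :
    Real.exp (a * Real.log (1 / s)) = s ^ (-a) := by
  rw [Real.rpow_def_of_pos hs, one_div, Real.log_inv]
  ring_nf

/-- The Euclidean integral estimate in the proof of Lemma 4.3: for `r, z > 0` there is
`C > 0` such that for all `0 < s ≤ 1/2`,
`∫ e^{2 r Y_l} dY` over `{Y ∈ ℝ^l : Y_l ≥ 0, (r+z) Y_l ≤ log(1/s), |Y| ≤ (1/z) log(1/s)}`
is at most `C s^{−2r/(z+r)} (log(1/s))^l`. -/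
theorem weyl_chamber_integral_bound (l : ℕ) (hl : 1 ≤ l) (r z : ℝ) (hr : 0 < r)
    (hz : 0 < z) :
    ∃ C : ℝ, 0 < C ∧ ∀ s : ℝ, 0 < s → s ≤ 1 / 2 →
      (∫⁻ Y in {Y : EuclideanSpace ℝ (Fin l) |
            0 ≤ Y ⟨l - 1, by omega⟩ ∧
            (r + z) * Y ⟨l - 1, by omega⟩ ≤ Real.log (1 / s) ∧
            ‖Y‖ ≤ (1 / z) * Real.log (1 / s)},
          ENNReal.ofReal (Real.exp (2 * r * Y ⟨l - 1, by omega⟩))) ≤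
        ENNReal.ofReal (C * s ^ (-(2 * r) / (z + r)) * Real.log (1 / s) ^ l) := by
  set B := volume.real (ball (0 : EuclideanSpace ℝ (Fin l)) 1)
  have hB : 0 < B := ENNReal.toReal_pos (measure_ball_pos volume 0 one_pos).ne'
    measure_ball_lt_top.ne
  refine ⟨B * (1 / z) ^ l, by positivity, fun s hs hs2 => ?_⟩
  set L := Real.log (1 / s)
  have hL : 0 ≤ L := Real.log_nonneg (by rw [le_div_iff₀ hs]; linarith)
  refine (setLIntegral_le_mul_measure_of_le
    (c := ENNReal.ofReal (s ^ (-(2 * r) / (z + r)))) ?integrand).trans ?_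
  case integrand =>
    rintro Y ⟨-, hY, -⟩
    rw [neg_div, ← Real.exp_mul_log_one_div hs]
    refine ENNReal.ofReal_le_ofReal (Real.exp_le_exp.2 ?_)
    rw [div_mul_eq_mul_div, le_div_iff₀ (by positivity)]
    nlinarith
  calc _ ≤ ENNReal.ofReal (s ^ (-(2 * r) / (z + r))) * ENNReal.ofReal ((L / z) ^ l * B) := by
        gcongr
        refine (Measure.addHaar_le_of_subset_closedBall volume (x := 0) (R := L / z)
          (by positivity) ?_).trans_eq (by rw [finrank_euclideanSpace_fin])
        rintro Y ⟨-, -, hY⟩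
        simpa [div_eq_inv_mul] using hY
    _ = _ := by
        rw [← ENNReal.ofReal_mul (by positivity), div_pow]
        ring_nf
end
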